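/- For every complex number x, ∑_{ν ∈ ℤ} J_{6ν}(x) = (1/3)[1 + 2 cos(x√3/2)], ∑_{ν ∈ ℤ} J_{6ν+1}(x) = (1/√3) sin(x√3/2), ∑_{ν ∈ ℤ} J_{6ν+2}(x) = (1/3)[1 − cos(x√3/2)], and ∑_{ν ∈ ℤ} J_{6ν+3}(x) = 0. -/

import Mathlib

open scoped Real

/-- Bessel function of the first kind of natural order `n`, via its power series. -/
noncomputable def besselJNat (n : ℕ) (x : ℂ) : ℂ :=
  ∑' m : ℕ, (-1 : ℂ) ^ m / ((m.factorial : ℂ) * ((m + n).factorial : ℂ)) * (x / 2) ^ (2 * m + n)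

/-- Bessel function of the first kind of integer order, with `J_{-n} = (-1)^n J_n`. -/
noncomputable def besselJ (n : ℤ) (x : ℂ) : ℂ :=
  if 0 ≤ n then besselJNat n.toNat x else (-1 : ℂ) ^ n.natAbs * besselJNat n.natAbs x

/-!
Multiplying the exponential series of `exp (x t / 2)` and `exp (-x / (2 t))` and grouping the
terms `(p, q)` by `p - q`, the power of `t` they carry, gives the generating function
`∑ₙ Jₙ(x) tⁿ = exp (x / 2 * (t - t⁻¹))`. Averaging it over the sixth roots of unity `t = ζʲ` with
weights `ζ^(-j r)` keeps exactly the orders `n ≡ r (mod 6)`. Since `ζʲ - ζ^(-j)` is `0` or `± i √3`,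
each residue-class sum is a combination of `1` and `exp (± i x √3 / 2)` with coefficients in
`ℚ(ζ)`, which is then evaluated for `r = 0, 1, 2, 3`.
-/

open Complex Finset

lemma besselJ_natCast (n : ℕ) (x : ℂ) : besselJ n x = besselJNat n x := by
  simp [besselJ]

lemma besselJ_neg_natCast (n : ℕ) (x : ℂ) : besselJ (-n) x = (-1) ^ n * besselJNat n x := by
  rcases n.eq_zero_or_pos with rfl | hn
  · simp [besselJ]
  · simp [besselJ, hn.ne']

def diffMinEquiv : ℕ × ℕ ≃ ℤ × ℕ where
  toFun q := ((q.1 : ℤ) - q.2, min q.1 q.2)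
  invFun p := (p.2 + p.1.toNat, p.2 + (-p.1).toNat)
  left_inv q := by ext <;> simp <;> omega
  right_inv p := by ext <;> simp; omega

@[simp]
lemma diffMinEquiv_symm_apply (n : ℤ) (k : ℕ) :
    diffMinEquiv.symm (n, k) = (k + n.toNat, k + (-n).toNat) := rfl

lemma hasSum_cexp (z : ℂ) : HasSum (fun n : ℕ => z ^ n / n.factorial) (exp z) := by
  rw [exp_eq_exp_ℂ]
  exact NormedSpace.expSeries_div_hasSum_exp z

lemma hasSum_exp_mul_exp (u v : ℂ) :
    HasSum (fun q : ℕ × ℕ => u ^ q.1 / q.1.factorial * (v ^ q.2 / q.2.factorial))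
      (exp u * exp v) :=
  HasSum.mul (f := fun n : ℕ => u ^ n / n.factorial) (g := fun n : ℕ => v ^ n / n.factorial)
    (hasSum_cexp u) (hasSum_cexp v)
    ((NormedSpace.norm_expSeries_div_summable u).mul_norm
      (NormedSpace.norm_expSeries_div_summable v)).of_norm

lemma pow_div_factorial_mul_pow_div_factorial_eq (x s : ℂ) (hs : s ≠ 0) (n k : ℕ) :
    (x * s / 2) ^ (k + n) / (k + n).factorial * ((-(x * s⁻¹ / 2)) ^ k / k.factorial)
      = (-1 : ℂ) ^ k / (k.factorial * (k + n).factorial) * (x / 2) ^ (2 * k + n) * s ^ n := by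
  have hprod : x * s / 2 * -(x * s⁻¹ / 2) = -1 * (x / 2) ^ 2 := by
    field_simp
  calc _ = (x * s / 2) ^ k * (-(x * s⁻¹ / 2)) ^ k * (x / 2) ^ n * s ^ n
        / (k.factorial * (k + n).factorial) := by ring
    _ = _ := by rw [← mul_pow, hprod, mul_pow, ← pow_mul]; ring

lemma hasSum_besselJNat_mul_pow (x s : ℂ) (hs : s ≠ 0) (n : ℕ)
    (hsum : Summable fun k : ℕ =>
      (x * s / 2) ^ (k + n) / (k + n).factorial * ((-(x * s⁻¹ / 2)) ^ k / k.factorial)) :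
    HasSum (fun k : ℕ =>
      (x * s / 2) ^ (k + n) / (k + n).factorial * ((-(x * s⁻¹ / 2)) ^ k / k.factorial))
      (besselJNat n x * s ^ n) := by
  convert hsum.hasSum using 1
  simp_rw [pow_div_factorial_mul_pow_div_factorial_eq x s hs, tsum_mul_right, besselJNat]

theorem hasSum_besselJ_mul_zpow (x t : ℂ) (ht : t ≠ 0) :
    HasSum (fun n : ℤ => besselJ n x * t ^ n) (exp (x / 2 * (t - t⁻¹))) := by
  set f := fun q : ℕ × ℕ =>
    (x * t / 2) ^ q.1 / q.1.factorial * ((-(x * t⁻¹ / 2)) ^ q.2 / q.2.factorial)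
  have hf : HasSum (f ∘ diffMinEquiv.symm) (exp (x / 2 * (t - t⁻¹))) := by
    rw [diffMinEquiv.symm.hasSum_iff, show x / 2 * (t - t⁻¹) = x * t / 2 + -(x * t⁻¹ / 2) by ring,
      exp_add]
    exact hasSum_exp_mul_exp _ _
  refine hf.prod_fiberwise fun n => ?_
  have hsum := hf.summable.prod_factor n
  obtain ⟨n, rfl | rfl⟩ := n.eq_nat_or_neg
  · simp only [Function.comp_apply, diffMinEquiv_symm_apply, Int.toNat_natCast,
      Int.toNat_neg_natCast, add_zero, zpow_natCast, besselJ_natCast, f] at hsum ⊢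
    exact hasSum_besselJNat_mul_pow x t ht n hsum
  · simp only [Function.comp_apply, diffMinEquiv_symm_apply, Int.toNat_neg_natCast, add_zero,
      neg_neg, Int.toNat_natCast, zpow_neg, zpow_natCast, besselJ_neg_natCast, f] at hsum ⊢
    -- the fibre of `-n` is the fibre of `n` for `-t⁻¹` instead of `t`, with the factors swapped
    have key := hasSum_besselJNat_mul_pow x (-t⁻¹) (neg_ne_zero.2 (inv_ne_zero ht)) n
      (by simpa only [inv_neg, inv_inv, mul_neg, neg_div, neg_neg, mul_comm] using hsum)
    simp only [inv_neg, inv_inv, mul_neg, neg_div, neg_neg] at key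
    convert key using 1
    · exact funext fun k => mul_comm _ _
    · rw [neg_pow t⁻¹, inv_pow]
      ring

section RootsOfUnityFilter

variable {K : Type*} [Field K] {ζ : K} {N : ℕ}

theorem IsPrimitiveRoot.sum_range_zpow_mul (hζ : IsPrimitiveRoot ζ N) (m : ℤ) :
    ∑ j ∈ range N, ζ ^ ((j : ℤ) * m) = if (N : ℤ) ∣ m then (N : K) else 0 := by
  simp_rw [mul_comm _ m, zpow_mul, zpow_natCast]
  split_ifs with h
  · simp [(hζ.zpow_eq_one_iff_dvd m).2 h]
  · have hN : (ζ ^ m) ^ N = 1 := by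
      rw [← zpow_natCast, ← zpow_mul, mul_comm, zpow_mul, zpow_natCast, hζ.pow_eq_one, one_zpow]
    rw [geom_sum_eq ((hζ.zpow_eq_one_iff_dvd m).not.2 h), hN, sub_self, zero_div]

theorem IsPrimitiveRoot.hasSum_comp_mul_add [TopologicalSpace K] [IsTopologicalSemiring K]
    [NeZero N] (hζ : IsPrimitiveRoot ζ N) {a : ℤ → K} {F : ℕ → K}
    (hF : ∀ j < N, HasSum (fun n : ℤ => a n * ζ ^ ((j : ℤ) * n)) (F j)) (r : ℤ) :
    HasSum (fun ν : ℤ => a (N * ν + r)) ((∑ j ∈ range N, ζ ^ (-((j : ℤ) * r)) * F j) / N) := by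
  have hN : (N : K) ≠ 0 := hζ.neZero'.out
  have hζ0 : ζ ≠ 0 := hζ.ne_zero (NeZero.ne N)
  set g : ℤ → K := fun n => (∑ j ∈ range N, ζ ^ (-((j : ℤ) * r)) * (a n * ζ ^ ((j : ℤ) * n))) / N
  have hg : HasSum g ((∑ j ∈ range N, ζ ^ (-((j : ℤ) * r)) * F j) / N) :=
    (hasSum_sum fun j hj => (hF j (mem_range.1 hj)).mul_left _).div_const _
  have hg_eq (n : ℤ) : g n = if (N : ℤ) ∣ n - r then a n else 0 := by
    have : ∑ j ∈ range N, ζ ^ (-((j : ℤ) * r)) * (a n * ζ ^ ((j : ℤ) * n))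
        = a n * ∑ j ∈ range N, ζ ^ ((j : ℤ) * (n - r)) := by
      rw [mul_sum]
      refine sum_congr rfl fun j _ => ?_
      rw [mul_sub, sub_eq_neg_add, zpow_add₀ hζ0]
      ring
    simp only [g, this, hζ.sum_range_zpow_mul]
    split_ifs <;> simp [hN]
  have hinj : Function.Injective (fun ν : ℤ => N * ν + r) := fun ν μ h => by
    simpa [NeZero.ne N] using h
  refine ((hinj.hasSum_iff fun n hn => ?_).2 hg).congr_fun fun ν => ?_
  · rw [hg_eq, if_neg]
    rintro ⟨ν, hν⟩
    exact hn ⟨ν, by simp only; omega⟩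
  · simp [hg_eq]

end RootsOfUnityFilter

theorem IsPrimitiveRoot.hasSum_besselJ_mul_add {ζ : ℂ} {N : ℕ} [NeZero N]
    (hζ : IsPrimitiveRoot ζ N) (x : ℂ) (r : ℤ) :
    HasSum (fun ν : ℤ => besselJ (N * ν + r) x)
      ((∑ j ∈ range N, ζ ^ (-((j : ℤ) * r)) * exp (x / 2 * (ζ ^ j - (ζ ^ j)⁻¹))) / N) := by
  refine hζ.hasSum_comp_mul_add (a := fun n => besselJ n x)
    (F := fun j => exp (x / 2 * (ζ ^ j - (ζ ^ j)⁻¹))) (fun j _ => ?_) r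
  simpa only [zpow_mul, zpow_natCast] using
    hasSum_besselJ_mul_zpow x (ζ ^ j) (pow_ne_zero j (hζ.ne_zero (NeZero.ne N)))

lemma ofReal_sqrt_three_sq : ((√3 : ℝ) : ℂ) ^ 2 = 3 := by
  norm_cast
  simp

noncomputable def ζ₆ : ℂ := (1 + (√3 : ℝ) * I) / 2

lemma isPrimitiveRoot_ζ₆ : IsPrimitiveRoot ζ₆ 6 := by
  have h : ζ₆ = exp (2 * π * I / (6 : ℕ)) := by
    rw [ζ₆, show 2 * π * I / (6 : ℕ) = (π / 3 : ℝ) * I by push_cast; ring, exp_mul_I,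
      ← ofReal_cos, ← ofReal_sin, Real.cos_pi_div_three, Real.sin_pi_div_three]
    push_cast
    ring
  rw [h]
  exact isPrimitiveRoot_exp 6 (by norm_num)

theorem tsum_besselJ_six_mul_add (x : ℂ) (r : ℕ) :
    ∑' ν : ℤ, besselJ (6 * ν + r) x =
      (1 + (ζ₆ ^ (3 * r))⁻¹ + ((ζ₆ ^ r)⁻¹ + (ζ₆ ^ (2 * r))⁻¹) * exp (x * (√3 : ℝ) / 2 * I)
        + ((ζ₆ ^ (4 * r))⁻¹ + (ζ₆ ^ (5 * r))⁻¹) * exp (-(x * (√3 : ℝ) / 2) * I)) / 6 := by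
  -- the relations from which `grind` computes in `ℚ(√3, i)`
  have hζ : ζ₆ = (1 + (√3 : ℝ) * I) / 2 := rfl
  have h3 := ofReal_sqrt_three_sq
  have hI := I_sq
  have e1 : x / 2 * (ζ₆ ^ 1 - (ζ₆ ^ 1)⁻¹) = x * (√3 : ℝ) / 2 * I := by grind
  have e2 : x / 2 * (ζ₆ ^ 2 - (ζ₆ ^ 2)⁻¹) = x * (√3 : ℝ) / 2 * I := by grind
  have e3 : x / 2 * (ζ₆ ^ 3 - (ζ₆ ^ 3)⁻¹) = 0 := by grind
  have e4 : x / 2 * (ζ₆ ^ 4 - (ζ₆ ^ 4)⁻¹) = -(x * (√3 : ℝ) / 2) * I := by grind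
  have e5 : x / 2 * (ζ₆ ^ 5 - (ζ₆ ^ 5)⁻¹) = -(x * (√3 : ℝ) / 2) * I := by grind
  have h := (isPrimitiveRoot_ζ₆.hasSum_besselJ_mul_add x r).tsum_eq
  simp only [← Nat.cast_mul, zpow_neg, zpow_natCast, sum_range_succ, sum_range_zero] at h
  rw [e1, e2, e3, e4, e5] at h
  push_cast at h
  rw [h]
  simp only [pow_zero, inv_one, sub_self, mul_zero, exp_zero, zero_mul]
  ring

theorem stmt_8 (x : ℂ) :
    (∑' ν : ℤ, besselJ (6 * ν) x
        = (1 / 3) * (1 + 2 * Complex.cos (x * (Real.sqrt 3 : ℝ) / 2))) ∧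
    (∑' ν : ℤ, besselJ (6 * ν + 1) x
        = (1 / (Real.sqrt 3 : ℂ)) * Complex.sin (x * (Real.sqrt 3 : ℝ) / 2)) ∧
    (∑' ν : ℤ, besselJ (6 * ν + 2) x
        = (1 / 3) * (1 - Complex.cos (x * (Real.sqrt 3 : ℝ) / 2))) ∧
    (∑' ν : ℤ, besselJ (6 * ν + 3) x = 0) := by
  have hζ : ζ₆ = (1 + (√3 : ℝ) * I) / 2 := rfl
  have h3 := ofReal_sqrt_three_sq
  have hI := I_sq
  refine ⟨?_, ?_, ?_, ?_⟩
  · have h := tsum_besselJ_six_mul_add x 0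
    simp only [Nat.cast_zero, add_zero, mul_zero, pow_zero, inv_one] at h
    rw [h, cos]
    ring
  · have h := tsum_besselJ_six_mul_add x 1
    rw [Nat.cast_one] at h
    rw [h, sin]
    grind
  · have h := tsum_besselJ_six_mul_add x 2
    rw [Nat.cast_ofNat] at h
    rw [h, cos]
    grind
  · have h := tsum_besselJ_six_mul_add x 3
    rw [Nat.cast_ofNat] at h
    rw [h]
    grind
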